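/- (Scaling) Let ϱ be a strongly Markov dynamic risk mapping and γ ≥ 0. For 0 < z ≤ ẑ ≤ 1 set h := h^{0,z}_{0,γ} and ĥ := h^{0,ẑ}_{0,γ}. Then for every δ ∈ (0,z), h(z − δ) ≤ ĥ(ẑ − δ); consequently, if h and ĥ are differentiable then h′⁻(z) ≥ ĥ′⁻(ẑ), where ′⁻ denotes the left derivative. Conversely, for β ≥ 0, if h := h^{0,z}_{β,0} and ĥ := h^{0,ẑ}_{β,0} are differentiable then h′⁻(z) ≤ ĥ′⁻(ẑ). -/

import Mathlib

open MeasureTheory ProbabilityTheory Filter Set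
open scoped Classical ENNReal

noncomputable section

/-- Sample space: continuous paths indexed by the real line. -/
abbrev PathSpace : Type := {f : ℝ → ℝ // Continuous f}

/-- The natural filtration `F_t = σ(B_s : s ≤ t)` (for `t ≥ 0`, negative times included at `t = 0`),
indexed by `ℝ≥0∞`. -/
def natF (t : ℝ≥0∞) : MeasurableSpace PathSpace :=
  ⨆ (s : ℝ) (_ : ENNReal.ofReal s ≤ t),
    MeasurableSpace.comap (fun ω : PathSpace => ω.1 s) inferInstance

/-- The natural filtration as a `Filtration`. -/
def FF : MeasureTheory.Filtration ℝ≥0∞ (inferInstance : MeasurableSpace PathSpace) where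
  seq := natF
  mono' := by
    intro i j hij
    exact iSup₂_le fun s hs => le_iSup₂_of_le s (hs.trans hij) le_rfl
  le' := by
    intro t
    exact iSup₂_le fun s _ =>
      Measurable.comap_le ((measurable_pi_apply s).comp measurable_subtype_coe)

/-- σ-algebra of the (two-sided) past before a real time `s`. -/
def pastSA (s : ℝ) : MeasurableSpace PathSpace :=
  ⨆ (u : ℝ) (_ : u ≤ s), MeasurableSpace.comap (fun ω : PathSpace => ω.1 u) inferInstance

/-- `P x` is a family of probability measures under which the coordinate process is a
standard Brownian motion started at `x`. -/
def IsBMFamily (P : ℝ → Measure PathSpace) : Prop :=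
  (∀ x, IsProbabilityMeasure (P x)) ∧
  (∀ x ∈ Set.Icc (0:ℝ) 1, ∀ᵐ ω ∂P x, ω.1 0 = x) ∧
  (∀ x ∈ Set.Icc (0:ℝ) 1, ∀ s t : ℝ, s ≤ t →
    (P x).map (fun ω : PathSpace => ω.1 t - ω.1 s) = gaussianReal 0 (Real.toNNReal (t - s))) ∧
  (∀ x ∈ Set.Icc (0:ℝ) 1, ∀ s t : ℝ, s ≤ t →
    ProbabilityTheory.Indep (pastSA s)
      (MeasurableSpace.comap (fun ω : PathSpace => ω.1 t - ω.1 s) inferInstance) (P x))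

/-- Absorption time `τ̃ = inf{t ≥ 0 : B_t ∈ {0,1}}`. -/
def absT (ω : PathSpace) : ℝ≥0∞ :=
  sInf (ENNReal.ofReal '' {t : ℝ | 0 ≤ t ∧ (ω.1 t = 0 ∨ ω.1 t = 1)})

/-- Brownian motion absorbed at `0` and `1`: `X_t = B_{t ∧ τ̃}`. -/
def Xproc (t : ℝ) (ω : PathSpace) : ℝ :=
  if ENNReal.ofReal t < absT ω then ω.1 t else ω.1 (absT ω).toReal

/-- Hitting time `τ_a = inf{t ≥ 0 : X_t = a}` of the absorbed process. -/
def hitT (a : ℝ) (ω : PathSpace) : ℝ≥0∞ :=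
  sInf (ENNReal.ofReal '' {t : ℝ | 0 ≤ t ∧ Xproc t ω = a})

/-- Exit time `τ_{a,b} = inf{t ≥ 0 : X_t ∉ (a,b)}`. -/
def exitT (a b : ℝ) (ω : PathSpace) : ℝ≥0∞ :=
  sInf (ENNReal.ofReal '' {t : ℝ | 0 ≤ t ∧ Xproc t ω ∉ Set.Ioo a b})

/-- The value `X_τ` of the absorbed process at a stopping time. -/
def stopX (τ : PathSpace → ℝ≥0∞) (ω : PathSpace) : ℝ := Xproc (τ ω).toReal ω

/-- The process `X` stopped at `τ`: `t ↦ X_{t ∧ τ}`. -/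
def XstopAt (τ : PathSpace → ℝ≥0∞) (t : ℝ) (ω : PathSpace) : ℝ :=
  Xproc (min (ENNReal.ofReal t) (τ ω)).toReal ω

/-- The shift operator `θ_t(ω)(s) = ω(t+s)`. -/
def thetaShift (t : ℝ) (ω : PathSpace) : PathSpace :=
  ⟨fun s => ω.1 (t + s), ω.2.comp (continuous_add_left t)⟩

/-- Bounded measurable random variables. -/
def BddMeas (Z : PathSpace → ℝ) : Prop :=
  Measurable Z ∧ ∃ C : ℝ, ∀ ω, |Z ω| ≤ C

/-- `𝒯`, the set of `P^x`-a.s. finite stopping times. -/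
def STSet (P : ℝ → Measure PathSpace) (x : ℝ) : Set (PathSpace → ℝ≥0∞) :=
  {τ | MeasureTheory.IsStoppingTime FF (fun ω => (τ ω : WithTop ℝ≥0∞)) ∧ ∀ᵐ ω ∂P x, τ ω < ⊤}

/-- A dynamic (conditional) risk mapping: `cρ τ x` is `ρ_τ^x`, defined at stopping times
(deterministic times being constant stopping times), and `ρ0 x = ρ^x = ρ_0^x` is real valued. -/
structure DynRisk (P : ℝ → Measure PathSpace) where
  cρ : (PathSpace → ℝ≥0∞) → ℝ → (PathSpace → ℝ) → PathSpace → ℝ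
  ρ0 : ℝ → (PathSpace → ℝ) → ℝ
  ρ0_eq : ∀ x Z ω, cρ (fun _ => 0) x Z ω = ρ0 x Z
  adapted : ∀ (τ : PathSpace → ℝ≥0∞) (hτ : MeasureTheory.IsStoppingTime FF (fun ω => (τ ω : WithTop ℝ≥0∞))) (x : ℝ)
      (Z : PathSpace → ℝ), BddMeas Z → Measurable[hτ.measurableSpace] (cρ τ x Z)
  normalized : ∀ (τ : PathSpace → ℝ≥0∞), MeasureTheory.IsStoppingTime FF (fun ω => (τ ω : WithTop ℝ≥0∞)) →
      ∀ x ∈ Set.Icc (0:ℝ) 1, ∀ᵐ ω ∂P x, cρ τ x (fun _ => 0) ω = 0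
  mono : ∀ (τ : PathSpace → ℝ≥0∞), MeasureTheory.IsStoppingTime FF (fun ω => (τ ω : WithTop ℝ≥0∞)) →
      ∀ x ∈ Set.Icc (0:ℝ) 1, ∀ Y Z : PathSpace → ℝ, BddMeas Y → BddMeas Z →
      (∀ᵐ ω ∂P x, Y ω ≤ Z ω) → ∀ᵐ ω ∂P x, cρ τ x Y ω ≤ cρ τ x Z ω
  transInv : ∀ (τ : PathSpace → ℝ≥0∞) (hτ : MeasureTheory.IsStoppingTime FF (fun ω => (τ ω : WithTop ℝ≥0∞))),
      ∀ x ∈ Set.Icc (0:ℝ) 1, ∀ Y Z : PathSpace → ℝ, BddMeas Y → BddMeas Z →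
      Measurable[hτ.measurableSpace] Z →
      ∀ᵐ ω ∂P x, cρ τ x (fun ω' => Y ω' + Z ω') ω = cρ τ x Y ω + Z ω

variable {P : ℝ → Measure PathSpace}

/-- Time consistency: `ρ_{τ₁}^x = ρ_{τ₁}^x ∘ ρ_{τ₂}^x` for bounded stopping times `τ₁ ≤ τ₂`. -/
def TimeConsistent (R : DynRisk P) : Prop :=
  ∀ τ₁ τ₂ : PathSpace → ℝ≥0∞, MeasureTheory.IsStoppingTime FF (fun ω => (τ₁ ω : WithTop ℝ≥0∞)) →
    MeasureTheory.IsStoppingTime FF (fun ω => (τ₂ ω : WithTop ℝ≥0∞)) → (∃ T : ℝ≥0∞, T ≠ ⊤ ∧ ∀ ω, τ₂ ω ≤ T) →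
    (∀ ω, τ₁ ω ≤ τ₂ ω) → ∀ x ∈ Set.Icc (0:ℝ) 1, ∀ Z : PathSpace → ℝ, BddMeas Z →
    ∀ᵐ ω ∂P x, R.cρ τ₁ x (R.cρ τ₂ x Z) ω = R.cρ τ₁ x Z ω

/-- Time consistency at arbitrary (not necessarily bounded) stopping times. -/
def TimeConsistentST (R : DynRisk P) : Prop :=
  ∀ τ₁ τ₂ : PathSpace → ℝ≥0∞, MeasureTheory.IsStoppingTime FF (fun ω => (τ₁ ω : WithTop ℝ≥0∞)) →
    MeasureTheory.IsStoppingTime FF (fun ω => (τ₂ ω : WithTop ℝ≥0∞)) →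
    (∀ ω, τ₁ ω ≤ τ₂ ω) → ∀ x ∈ Set.Icc (0:ℝ) 1, ∀ Z : PathSpace → ℝ, BddMeas Z →
    ∀ᵐ ω ∂P x, R.cρ τ₁ x (R.cρ τ₂ x Z) ω = R.cρ τ₁ x Z ω

/-- Conditional locality. -/
def CondLocal (R : DynRisk P) : Prop :=
  ∀ (τ : PathSpace → ℝ≥0∞) (hτ : MeasureTheory.IsStoppingTime FF (fun ω => (τ ω : WithTop ℝ≥0∞))),
    ∀ x ∈ Set.Icc (0:ℝ) 1, ∀ Y Z : PathSpace → ℝ, BddMeas Y → BddMeas Z →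
    ∀ A : Set PathSpace, MeasurableSet[hτ.measurableSpace] A →
    ∀ᵐ ω ∂P x, R.cρ τ x (fun ω' => if ω' ∈ A then Y ω' else Z ω') ω
      = if ω ∈ A then R.cρ τ x Y ω else R.cρ τ x Z ω

/-- Continuity of the risk mapping. -/
def RMContinuous (R : DynRisk P) : Prop :=
  ∀ τ : PathSpace → ℝ≥0∞, MeasureTheory.IsStoppingTime FF (fun ω => (τ ω : WithTop ℝ≥0∞)) → ∀ x ∈ Set.Icc (0:ℝ) 1,
    ∀ (Y : ℕ → PathSpace → ℝ) (Ylim : PathSpace → ℝ),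
    (∀ n, Measurable (Y n)) → Measurable Ylim → (∃ C : ℝ, ∀ n ω, |Y n ω| ≤ C) →
    (∀ᵐ ω ∂P x, Filter.Tendsto (fun n => Y n ω) Filter.atTop (nhds (Ylim ω))) →
    ∀ᵐ ω ∂P x, Filter.Tendsto (fun n => R.cρ τ x (Y n) ω) Filter.atTop
      (nhds (R.cρ τ x Ylim ω))

/-- The strong Markov property for the risk mapping, together with the existence of a
reference mapping. -/
def StronglyMarkov (R : DynRisk P) : Prop :=
  (∀ τ : PathSpace → ℝ≥0∞, MeasureTheory.IsStoppingTime FF (fun ω => (τ ω : WithTop ℝ≥0∞)) → ∀ x ∈ Set.Icc (0:ℝ) 1,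
    (∀ᵐ ω ∂P x, τ ω < ⊤) → ∀ Z : PathSpace → ℝ, BddMeas Z →
    ∀ᵐ ω ∂P x, R.cρ τ x (fun ω' => Z (thetaShift (τ ω').toReal ω')) ω
      = R.ρ0 (stopX τ ω) Z) ∧
  (∃ ρtilde : Measure ℝ → ℝ, ∀ x ∈ Set.Icc (0:ℝ) 1, ∀ Z : PathSpace → ℝ, BddMeas Z →
    R.ρ0 x Z = ρtilde ((P x).map Z))

/-- The payoff `β·1_{τ_y < τ_z} + γ·1_{τ_y > τ_z}`. -/
def hInd (y z β γ : ℝ) (ω : PathSpace) : ℝ :=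
  (if hitT y ω < hitT z ω then β else 0) + (if hitT z ω < hitT y ω then γ else 0)

/-- The real-valued version of `h^{y,z}_{β,γ}`. -/
def hFunR (R : DynRisk P) (y z β γ : ℝ) (x : ℝ) : ℝ := R.ρ0 x (hInd y z β γ)

/-- `h^{y,z}_{β,γ}`, set to `∞` outside `[y,z]`. -/
def hFun (R : DynRisk P) (y z β γ : ℝ) (x : ℝ) : EReal :=
  if x ∈ Set.Icc y z then ((hFunR R y z β γ x : ℝ) : EReal) else ⊤

/-- `ḡ = max_{[0,1]} g`. -/
def gbar (g : ℝ → ℝ) : ℝ := sSup (g '' Set.Icc (0:ℝ) 1)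

/-- Constraints on the parameters `(y,z,β,γ)` defining the class `H`. -/
def HParam (g : ℝ → ℝ) (y z β γ : ℝ) : Prop :=
  β ∈ Set.Icc (0:ℝ) (gbar g + 2) ∧ γ ∈ Set.Icc (0:ℝ) (gbar g + 2) ∧
  0 ≤ y ∧ y < z ∧ z ≤ 1 ∧
  ((y = 0 ∧ z = 1) ∨ (0 < y ∧ y < 1 ∧ gbar g + 1 < β ∧ z = 1)
    ∨ (y = 0 ∧ 0 < z ∧ z < 1 ∧ gbar g + 1 < γ))

/-- Constraints on the parameters defining the larger class `Ĥ`. -/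
def HhatParam (g : ℝ → ℝ) (y z β γ : ℝ) : Prop :=
  β ∈ Set.Icc (0:ℝ) (gbar g + 2) ∧ γ ∈ Set.Icc (0:ℝ) (gbar g + 2) ∧ 0 ≤ y ∧ y < z ∧ z ≤ 1

/-- Membership in the class `H`. -/
def memH (g : ℝ → ℝ) (R : DynRisk P) (h : ℝ → EReal) : Prop :=
  ∃ y z β γ : ℝ, HParam g y z β γ ∧ h = hFun R y z β γ

/-- The (nonconcave) majorant `w(x) = inf{h(x) : h ∈ H, h ≥ g on [0,1]}`. -/
def wMaj (g : ℝ → ℝ) (R : DynRisk P) (x : ℝ) : EReal :=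
  sInf {v : EReal | ∃ h : ℝ → EReal, memH g R h ∧
    (∀ u ∈ Set.Icc (0:ℝ) 1, (g u : EReal) ≤ h u) ∧ v = h x}

/-- The value function `V(x) = sup_{τ ∈ 𝒯} ρ^x(g(X_τ))`. -/
def Vfun (g : ℝ → ℝ) (R : DynRisk P) (x : ℝ) : ℝ :=
  sSup {v : ℝ | ∃ τ ∈ STSet P x, v = R.ρ0 x (fun ω => g (stopX τ ω))}

/-- Continuity of the class `Ĥ`: each `h ∈ Ĥ` is continuous on `[y,z]`. -/
def HhatContinuous (g : ℝ → ℝ) (R : DynRisk P) : Prop :=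
  ∀ y z β γ : ℝ, HhatParam g y z β γ → ContinuousOn (hFunR R y z β γ) (Set.Icc y z)

/-- Uniform equicontinuity of the class `Ĥ`. -/
def HhatUnifEquicont (g : ℝ → ℝ) (R : DynRisk P) : Prop :=
  HhatContinuous g R ∧
  ∀ ε > (0:ℝ), ∀ Δ ∈ Set.Ioo (0:ℝ) (1/2), ∃ δ > (0:ℝ),
    ∀ y z β γ : ℝ, HhatParam g y z β γ →
    ∀ u v : ℝ, u ∈ Set.Icc y z ∩ Set.Ioo Δ (1-Δ) → v ∈ Set.Icc y z ∩ Set.Ioo Δ (1-Δ) →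
      |u - v| ≤ δ → |hFunR R y z β γ u - hFunR R y z β γ v| ≤ ε

/-- Differentiability of the class `Ĥ`. -/
def HhatDifferentiable (g : ℝ → ℝ) (R : DynRisk P) : Prop :=
  HhatContinuous g R ∧
  ∀ y z β γ : ℝ, HhatParam g y z β γ →
    ∀ u ∈ Set.Ioo y z, DifferentiableAt ℝ (hFunR R y z β γ) u

/-- Assumption 1 of the paper. -/
def Assumption1 (R : DynRisk P) (g : ℝ → ℝ) : Prop :=
  IsBMFamily P ∧ StronglyMarkov R ∧ TimeConsistent R ∧ RMContinuous R ∧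
    HhatUnifEquicont g R ∧ ContinuousOn g (Set.Icc (0:ℝ) 1) ∧
    (∀ u ∈ Set.Icc (0:ℝ) 1, 0 ≤ g u)

/-- A bounded process `M` is a `ϱ`-martingale under `P^x` if `ρ_s^x(M_t) = M_s` a.s.
for all `0 ≤ s ≤ t`. -/
def IsRhoMartingale (R : DynRisk P) (x : ℝ) (M : ℝ → PathSpace → ℝ) : Prop :=
  (∃ C : ℝ, ∀ t ω, |M t ω| ≤ C) ∧
  ∀ s t : ℝ, 0 ≤ s → s ≤ t →
    ∀ᵐ ω ∂P x, R.cρ (fun _ => ENNReal.ofReal s) x (M t) ω = M s ω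

/-- A càdlàg (right-continuous with left limits) real-indexed process. -/
def CadlagOn (M : ℝ → PathSpace → ℝ) : Prop :=
  ∀ ω : PathSpace,
    (∀ t : ℝ, 0 ≤ t → ContinuousWithinAt (fun s => M s ω) (Set.Ici t) t) ∧
    (∀ t : ℝ, 0 < t → ∃ l : ℝ,
      Filter.Tendsto (fun s => M s ω) (nhdsWithin t (Set.Iio t)) (nhds l))

/-- The candidate optimal stopping time `τ* = inf{t ≥ 0 : g(X_t) = V(X_t)}`. -/
def tauStarOf (g V : ℝ → ℝ) (ω : PathSpace) : ℝ≥0∞ :=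
  sInf (ENNReal.ofReal '' {t : ℝ | 0 ≤ t ∧ g (Xproc t ω) = V (Xproc t ω)})


namespace BMScale

/-- Generic first entrance time of a predicate on nonnegative times. -/
def fht (p : ℝ → Prop) : ℝ≥0∞ := sInf (ENNReal.ofReal '' {t : ℝ | 0 ≤ t ∧ p t})

lemma fht_le {p : ℝ → Prop} {t : ℝ} (ht : 0 ≤ t) (hp : p t) : fht p ≤ ENNReal.ofReal t :=
  sInf_le ⟨t, ⟨ht, hp⟩, rfl⟩

lemma absT_eq (ω : PathSpace) : absT ω = fht (fun t => ω.1 t = 0 ∨ ω.1 t = 1) := rfl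

lemma hitT_eq (a : ℝ) (ω : PathSpace) : hitT a ω = fht (fun t => Xproc t ω = a) := rfl

/-- Raw (unabsorbed) hitting time of level `a`. -/
def rawT (a : ℝ) (ω : PathSpace) : ℝ≥0∞ := fht (fun t => ω.1 t = a)

lemma fht_attains {p : ℝ → Prop} (hc : IsClosed {t : ℝ | 0 ≤ t ∧ p t}) (h : fht p ≠ ⊤) :
    0 ≤ (fht p).toReal ∧ p ((fht p).toReal) ∧ ENNReal.ofReal (fht p).toReal = fht p := by
  classical
  set S : Set ℝ := {t : ℝ | 0 ≤ t ∧ p t} with hS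
  have hne : S.Nonempty := by
    by_contra hemp
    rw [Set.not_nonempty_iff_eq_empty] at hemp
    apply h
    simp [fht, ← hS, hemp]
  have hbd : BddBelow S := ⟨0, fun t ht => ht.1⟩
  have hmem : sInf S ∈ S := hc.csInf_mem hne hbd
  have hval : fht p = ENNReal.ofReal (sInf S) := by
    apply le_antisymm
    · exact fht_le hmem.1 hmem.2
    · refine le_sInf ?_
      rintro b ⟨t, htS, rfl⟩
      exact ENNReal.ofReal_le_ofReal (csInf_le hbd htS)
  have htr : (fht p).toReal = sInf S := by
    rw [hval, ENNReal.toReal_ofReal hmem.1]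
  refine ⟨by rw [htr]; exact hmem.1, by rw [htr]; exact hmem.2, by rw [htr, ← hval]⟩

lemma fht_or (p q : ℝ → Prop) : fht (fun t => p t ∨ q t) = fht p ⊓ fht q := by
  have : {t : ℝ | 0 ≤ t ∧ (p t ∨ q t)} = {t : ℝ | 0 ≤ t ∧ p t} ∪ {t : ℝ | 0 ≤ t ∧ q t} := by
    ext t; simp [and_or_left]
  rw [fht, this, Set.image_union, sInf_union]
  rfl

/-- Intermediate value comparison of level hitting times. -/
lemma fht_level_le {f : ℝ → ℝ} (hf : Continuous f) {a a' : ℝ}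
    (ha : a ∈ Set.uIcc (f 0) a') :
    fht (fun t => f t = a) ≤ fht (fun t => f t = a') := by
  refine le_sInf ?_
  rintro b ⟨t, ⟨ht0, hft⟩, rfl⟩
  have : a ∈ Set.uIcc (f 0) (f t) := by rw [hft]; exact ha
  have h2 : a ∈ f '' Set.uIcc 0 t := intermediate_value_uIcc hf.continuousOn this
  obtain ⟨t', ht', hft'⟩ := h2
  rw [Set.uIcc_of_le ht0] at ht'
  exact le_trans (fht_le ht'.1 hft') (ENNReal.ofReal_le_ofReal ht'.2)

lemma isClosed_level {f : ℝ → ℝ} (hf : Continuous f) (a : ℝ) :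
    IsClosed {t : ℝ | 0 ≤ t ∧ f t = a} := by
  have : {t : ℝ | 0 ≤ t ∧ f t = a} = Set.Ici 0 ∩ f ⁻¹' {a} := by ext t; simp [Set.mem_Ici]
  rw [this]
  exact isClosed_Ici.inter (isClosed_singleton.preimage hf)

lemma fht_level_ne {f : ℝ → ℝ} (hf : Continuous f) {a b : ℝ} (hab : a ≠ b)
    (heq : fht (fun t => f t = a) = fht (fun t => f t = b)) :
    fht (fun t => f t = a) = ⊤ := by
  by_contra hne
  obtain ⟨_, hpa, _⟩ := fht_attains (isClosed_level hf a) hne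
  rw [heq] at hne
  obtain ⟨_, hpb, _⟩ := fht_attains (isClosed_level hf b) hne
  rw [← heq] at hpb
  exact hab (hpa ▸ hpb ▸ rfl)

end BMScale

namespace BMScale

lemma absT_as_inf (ω : PathSpace) : absT ω = rawT 0 ω ⊓ rawT 1 ω := by
  rw [absT_eq, fht_or]; rfl

lemma absT_attains (ω : PathSpace) (h : absT ω ≠ ⊤) :
    0 ≤ (absT ω).toReal ∧ (ω.1 (absT ω).toReal = 0 ∨ ω.1 (absT ω).toReal = 1) ∧
      ENNReal.ofReal (absT ω).toReal = absT ω := by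
  have hc : IsClosed {t : ℝ | 0 ≤ t ∧ (ω.1 t = 0 ∨ ω.1 t = 1)} := by
    have : {t : ℝ | 0 ≤ t ∧ (ω.1 t = 0 ∨ ω.1 t = 1)}
        = {t : ℝ | 0 ≤ t ∧ ω.1 t = 0} ∪ {t : ℝ | 0 ≤ t ∧ ω.1 t = 1} := by
      ext t; simp [and_or_left]
    rw [this]
    exact (isClosed_level ω.2 0).union (isClosed_level ω.2 1)
  exact fht_attains (p := fun t => ω.1 t = 0 ∨ ω.1 t = 1) hc h

lemma Xproc_zero (ω : PathSpace) : Xproc 0 ω = ω.1 0 := by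
  unfold Xproc
  split
  · rfl
  · rename_i h
    have h0 : absT ω = 0 := by
      simpa using (not_lt.1 h)
    rw [h0]; simp

lemma rawT_le_hitT (a : ℝ) (ω : PathSpace) : rawT a ω ≤ hitT a ω := by
  rw [hitT_eq]
  refine le_sInf ?_
  rintro _ ⟨t, ⟨ht0, hXt⟩, rfl⟩
  unfold Xproc at hXt
  split at hXt
  · exact fht_le ht0 hXt
  · rename_i h
    have habs : absT ω ≤ ENNReal.ofReal t := not_lt.1 h
    have hne : absT ω ≠ ⊤ := (habs.trans_lt ENNReal.ofReal_lt_top).ne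
    obtain ⟨hr0, _, hofr⟩ := absT_attains ω hne
    exact le_trans (fht_le hr0 hXt) (hofr.le.trans habs)

lemma hitT_le_rawT (a : ℝ) (ω : PathSpace) (h : rawT a ω ≤ absT ω) :
    hitT a ω ≤ rawT a ω := by
  rcases eq_or_ne (rawT a ω) ⊤ with htop | hne
  · exact htop ▸ le_top
  obtain ⟨hr0, hra, hofr⟩ := fht_attains (isClosed_level ω.2 a) hne
  have hofr' : ENNReal.ofReal (rawT a ω).toReal = rawT a ω := hofr
  have hr0' : (0:ℝ) ≤ (rawT a ω).toReal := hr0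
  have hra' : ω.1 (rawT a ω).toReal = a := hra
  have hX : Xproc (rawT a ω).toReal ω = a := by
    unfold Xproc
    split
    · exact hra'
    · rename_i hlt
      have h2 : absT ω = ENNReal.ofReal (rawT a ω).toReal :=
        le_antisymm (not_lt.1 hlt) (by rw [hofr']; exact h)
      rw [h2, ENNReal.toReal_ofReal hr0']
      exact hra'
  rw [hitT_eq]
  exact (fht_le (p := fun s => Xproc s ω = a) hr0' hX).trans hofr'.le

/-- Comparison of hitting times of the absorbed process reduces to raw hitting times,
for levels `0 ≤ a < b ≤ 1` and start strictly inside `(a,b)`. -/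
lemma hit_iff (ω : PathSpace) {a b : ℝ} (ha : 0 ≤ a) (hb : b ≤ 1) (hab : a < b)
    (h0 : ω.1 0 ∈ Set.Ioo a b) :
    (hitT b ω < hitT a ω ↔ rawT b ω < rawT a ω) ∧
    (hitT a ω < hitT b ω ↔ rawT a ω < rawT b ω) := by
  have hc : Continuous (ω.1) := ω.2
  have h0a : rawT a ω ≤ rawT 0 ω :=
    fht_level_le hc (Set.mem_uIcc.2 (Or.inr ⟨ha, h0.1.le⟩))
  have hb1 : rawT b ω ≤ rawT 1 ω :=
    fht_level_le hc (Set.mem_uIcc.2 (Or.inl ⟨h0.2.le, hb⟩))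
  have habs : rawT a ω ⊓ rawT b ω ≤ absT ω := by
    rw [absT_as_inf]
    exact inf_le_inf h0a hb1
  rcases lt_trichotomy (rawT a ω) (rawT b ω) with hlt | heq | hgt
  · have hga : hitT a ω = rawT a ω :=
      le_antisymm (hitT_le_rawT a ω ((inf_eq_left.2 hlt.le) ▸ habs)) (rawT_le_hitT a ω)
    have h1 : hitT a ω < hitT b ω := by
      rw [hga]; exact hlt.trans_le (rawT_le_hitT b ω)
    exact ⟨⟨fun hcon => absurd hcon (not_lt.2 h1.le), fun hcon => absurd hcon (not_lt.2 hlt.le)⟩,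
      ⟨fun _ => hlt, fun _ => h1⟩⟩
  · have htop : rawT a ω = ⊤ := fht_level_ne hc hab.ne heq
    have hta : hitT a ω = ⊤ := top_le_iff.1 (htop ▸ rawT_le_hitT a ω)
    have htb : hitT b ω = ⊤ := top_le_iff.1 ((heq ▸ htop : rawT b ω = ⊤) ▸ rawT_le_hitT b ω)
    rw [hta, htb, htop, ← heq, htop]
    simp
  · have hgb : hitT b ω = rawT b ω :=
      le_antisymm (hitT_le_rawT b ω ((inf_eq_right.2 hgt.le) ▸ habs)) (rawT_le_hitT b ω)
    have h1 : hitT b ω < hitT a ω := by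
      rw [hgb]; exact hgt.trans_le (rawT_le_hitT a ω)
    exact ⟨⟨fun _ => hgt, fun _ => h1⟩,
      ⟨fun hcon => absurd hcon (not_lt.2 h1.le), fun hcon => absurd hcon (not_lt.2 hgt.le)⟩⟩

end BMScale

namespace BMScale

lemma measurable_eval (t : ℝ) : Measurable fun ω : PathSpace => ω.1 t :=
  (measurable_pi_apply t).comp measurable_subtype_coe

/-- Evaluating a continuous path at a measurable random time is measurable. -/
lemma measurable_eval_comp {τ : PathSpace → ℝ} (hτ : Measurable τ) :
    Measurable fun ω : PathSpace => ω.1 (τ ω) := by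
  have happrox : ∀ n : ℕ, Measurable fun ω : PathSpace => ω.1 ((⌈τ ω * 2 ^ n⌉ : ℝ) / 2 ^ n) := by
    intro n
    have hjoint : Measurable fun p : PathSpace × ℤ => p.1.1 ((p.2 : ℝ) / 2 ^ n) :=
      measurable_from_prod_countable_left fun k => measurable_eval ((k : ℝ) / 2 ^ n)
    exact hjoint.comp (measurable_id.prodMk ((hτ.mul_const _).ceil))
  apply measurable_of_tendsto_metrizable' (u := Filter.atTop) happrox
  rw [tendsto_pi_nhds]
  intro ω
  have htend : Filter.Tendsto (fun n : ℕ => (⌈τ ω * 2 ^ n⌉ : ℝ) / 2 ^ n)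
      Filter.atTop (nhds (τ ω)) := by
    have hbound : ∀ n : ℕ, |(⌈τ ω * 2 ^ n⌉ : ℝ) / 2 ^ n - τ ω| ≤ 1 / 2 ^ n := by
      intro n
      have h2 : (0:ℝ) < 2 ^ n := by positivity
      rw [abs_sub_le_iff]
      constructor
      · rw [div_sub' h2.ne']
        rw [div_le_div_iff₀ h2 h2]
        have := Int.ceil_lt_add_one (τ ω * 2 ^ n)
        nlinarith [Int.le_ceil (τ ω * 2 ^ n)]
      · rw [sub_div' h2.ne']
        rw [div_le_div_iff₀ h2 h2]
        nlinarith [Int.le_ceil (τ ω * 2 ^ n)]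
    have h0 : Filter.Tendsto (fun n : ℕ => (1:ℝ) / 2 ^ n) Filter.atTop (nhds 0) := by
      simpa [one_div, inv_pow] using
        tendsto_pow_atTop_nhds_zero_of_lt_one (by norm_num : (0:ℝ) ≤ 1/2)
          (by norm_num : (1:ℝ)/2 < 1)
    have hdiff : Filter.Tendsto (fun n : ℕ => (⌈τ ω * 2 ^ n⌉ : ℝ) / 2 ^ n - τ ω)
        Filter.atTop (nhds 0) :=
      squeeze_zero_norm (fun n => by simpa [Real.norm_eq_abs] using hbound n) h0
    simpa using hdiff.add_const (τ ω)
  exact (ω.2.tendsto (τ ω)).comp htend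

end BMScale

namespace BMScale

lemma fht_congr {p q : ℝ → Prop} (h : ∀ t, 0 ≤ t → (p t ↔ q t)) : fht p = fht q := by
  unfold fht
  have hs : {t : ℝ | 0 ≤ t ∧ p t} = {t : ℝ | 0 ≤ t ∧ q t} := by
    ext t; exact and_congr_right (h t)
  rw [hs]

lemma Xproc_cont (ω : PathSpace) : Continuous fun t => Xproc t ω := by
  rcases eq_or_ne (absT ω) ⊤ with htop | hne
  · have : (fun t => Xproc t ω) = fun t => ω.1 t := by
      funext t
      unfold Xproc
      rw [if_pos (htop ▸ ENNReal.ofReal_lt_top)]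
    rw [this]; exact ω.2
  rcases eq_or_ne (absT ω) 0 with hzero | hpos
  · have : (fun t => Xproc t ω) = fun _ => ω.1 (absT ω).toReal := by
      funext t
      unfold Xproc
      rw [if_neg (by rw [hzero]; exact not_lt.2 zero_le)]
    rw [this]; exact continuous_const
  · have hpos' : 0 < (absT ω).toReal := ENNReal.toReal_pos hpos hne
    have : (fun t => Xproc t ω) = fun t => ω.1 (min t (absT ω).toReal) := by
      funext t
      unfold Xproc
      by_cases h : ENNReal.ofReal t < absT ω
      · rw [if_pos h]
        rcases le_or_gt t 0 with ht0 | ht0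
        · rw [min_eq_left (ht0.trans hpos'.le)]
        · have : t < (absT ω).toReal := (ENNReal.ofReal_lt_iff_lt_toReal ht0.le hne).1 h
          rw [min_eq_left this.le]
      · rw [if_neg h]
        have h1 : absT ω ≤ ENNReal.ofReal t := not_lt.1 h
        rcases le_or_gt t 0 with ht0 | ht0
        · exfalso
          rw [ENNReal.ofReal_eq_zero.2 ht0] at h1
          exact hpos (le_antisymm h1 zero_le)
        · have : (absT ω).toReal ≤ t := by
            calc (absT ω).toReal ≤ (ENNReal.ofReal t).toReal :=
                  ENNReal.toReal_mono ENNReal.ofReal_ne_top h1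
            _ = t := ENNReal.toReal_ofReal ht0.le
          rw [min_eq_right this]
    rw [this]
    exact ω.2.comp (continuous_id.min continuous_const)

end BMScale

namespace BMScale

lemma iInf_rat_eq_zero_iff {G : ℝ → PathSpace → ℝ}
    (hGc : ∀ ω, Continuous fun t => G t ω) (hG0 : ∀ t ω, 0 ≤ G t ω)
    (ω : PathSpace) (q : ℚ) (hq : 0 ≤ (q:ℝ)) :
    (⨅ s : {s : ℚ // 0 ≤ (s:ℝ) ∧ (s:ℝ) ≤ (q:ℝ)}, ENNReal.ofReal (G (s:ℝ) ω)) = 0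
      ↔ ∃ t : ℝ, 0 ≤ t ∧ t ≤ (q:ℝ) ∧ G t ω = 0 := by
  constructor
  · intro h0
    obtain ⟨t, htmem, hmin⟩ := (isCompact_Icc (a := (0:ℝ)) (b := (q:ℝ))).exists_isMinOn
      (Set.nonempty_Icc.2 hq) (hGc ω).continuousOn
    refine ⟨t, htmem.1, htmem.2, le_antisymm ?_ (hG0 t ω)⟩
    by_contra hpos
    push_neg at hpos
    have hge : ENNReal.ofReal (G t ω)
        ≤ ⨅ s : {s : ℚ // 0 ≤ (s:ℝ) ∧ (s:ℝ) ≤ (q:ℝ)}, ENNReal.ofReal (G (s:ℝ) ω) :=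
      le_iInf fun s => ENNReal.ofReal_le_ofReal (hmin ⟨s.2.1, s.2.2⟩)
    rw [h0] at hge
    exact absurd hge (by simpa using (ENNReal.ofReal_pos.2 hpos).not_ge)
  · rintro ⟨t, ht0, htq, hGt⟩
    refine le_antisymm ?_ zero_le
    refine ENNReal.le_of_forall_pos_le_add fun ε hε _ => ?_
    rw [zero_add]
    have hU : IsOpen {s : ℝ | G s ω < (ε:ℝ)} := isOpen_lt (hGc ω) continuous_const
    have htU : t ∈ {s : ℝ | G s ω < (ε:ℝ)} := by
      simp only [Set.mem_setOf_eq, hGt]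
      exact_mod_cast hε
    obtain ⟨δ, hδ0, hball⟩ := Metric.isOpen_iff.1 hU t htU
    have hex : ∃ s : ℚ, 0 ≤ (s:ℝ) ∧ (s:ℝ) ≤ (q:ℝ) ∧ G (s:ℝ) ω < (ε:ℝ) := by
      rcases eq_or_lt_of_le htq with heq | hlt
      · refine ⟨q, hq, le_refl _, ?_⟩
        have : (q:ℝ) ∈ Metric.ball t δ := by
          rw [← heq]; exact Metric.mem_ball_self hδ0
        exact hball this
      · obtain ⟨s, hs1, hs2⟩ := exists_rat_btwn (lt_min hlt (lt_add_of_pos_right t hδ0))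
        refine ⟨s, ht0.trans hs1.le, (hs2.trans_le (min_le_left _ _)).le, ?_⟩
        apply hball
        rw [Metric.mem_ball, Real.dist_eq, abs_sub_lt_iff]
        exact ⟨by linarith [hs2.trans_le (min_le_right _ _)], by linarith⟩
    obtain ⟨s, hs0, hsq, hsε⟩ := hex
    calc (⨅ s : {s : ℚ // 0 ≤ (s:ℝ) ∧ (s:ℝ) ≤ (q:ℝ)}, ENNReal.ofReal (G (s:ℝ) ω))
        ≤ ENNReal.ofReal (G (s:ℝ) ω) := iInf_le (fun s : {s : ℚ // 0 ≤ (s:ℝ) ∧ (s:ℝ) ≤ (q:ℝ)} => ENNReal.ofReal (G (s:ℝ) ω)) ⟨s, hs0, hsq⟩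
      _ ≤ (ε : ℝ≥0∞) := by
          rw [← ENNReal.ofReal_coe_nnreal]
          exact ENNReal.ofReal_le_ofReal hsε.le

lemma measurable_fht {G : ℝ → PathSpace → ℝ}
    (hGc : ∀ ω, Continuous fun t => G t ω) (hGm : ∀ t, Measurable fun ω => G t ω)
    (hG0 : ∀ t ω, 0 ≤ G t ω) :
    Measurable fun ω => fht fun t => G t ω = 0 := by
  apply measurable_of_Iio
  intro c
  have hset : (fun ω => fht fun t => G t ω = 0) ⁻¹' (Set.Iio c) =
      ⋃ q : ℚ, {ω : PathSpace | 0 ≤ (q:ℝ) ∧ ENNReal.ofReal (q:ℝ) < c ∧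
        (⨅ s : {s : ℚ // 0 ≤ (s:ℝ) ∧ (s:ℝ) ≤ (q:ℝ)}, ENNReal.ofReal (G (s:ℝ) ω)) = 0} := by
    ext ω
    simp only [Set.mem_preimage, Set.mem_Iio, Set.mem_iUnion, Set.mem_setOf_eq]
    constructor
    · intro h
      obtain ⟨b, ⟨t, ⟨ht0, hGt⟩, rfl⟩, hbc⟩ := sInf_lt_iff.1 h
      obtain ⟨q, hq0, h1, h2⟩ := ENNReal.lt_iff_exists_rat_btwn.1 hbc
      have hq0' : (0:ℝ) ≤ (q:ℝ) := by exact_mod_cast hq0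
      have h1' : ENNReal.ofReal t < ENNReal.ofReal (q:ℝ) := h1
      have htq : t ≤ (q:ℝ) := ((ENNReal.ofReal_lt_ofReal_iff_of_nonneg ht0).1 h1').le
      exact ⟨q, hq0', h2, (iInf_rat_eq_zero_iff hGc hG0 ω q hq0').2 ⟨t, ht0, htq, hGt⟩⟩
    · rintro ⟨q, hq0, hqc, h0⟩
      obtain ⟨t, ht0, htq, hGt⟩ := (iInf_rat_eq_zero_iff hGc hG0 ω q hq0).1 h0
      exact lt_of_le_of_lt ((fht_le (p := fun t => G t ω = 0) ht0 hGt).trans (ENNReal.ofReal_le_ofReal htq)) hqc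
  rw [hset]
  refine MeasurableSet.iUnion fun q => ?_
  by_cases hq : 0 ≤ (q:ℝ) ∧ ENNReal.ofReal (q:ℝ) < c
  · have heq : {ω : PathSpace | 0 ≤ (q:ℝ) ∧ ENNReal.ofReal (q:ℝ) < c ∧
        (⨅ s : {s : ℚ // 0 ≤ (s:ℝ) ∧ (s:ℝ) ≤ (q:ℝ)}, ENNReal.ofReal (G (s:ℝ) ω)) = 0}
        = (fun ω : PathSpace =>
            ⨅ s : {s : ℚ // 0 ≤ (s:ℝ) ∧ (s:ℝ) ≤ (q:ℝ)}, ENNReal.ofReal (G (s:ℝ) ω)) ⁻¹' {0} := by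
      ext ω; simp [hq.1, hq.2]
    rw [heq]
    have hmi : Measurable fun ω : PathSpace =>
        ⨅ s : {s : ℚ // 0 ≤ (s:ℝ) ∧ (s:ℝ) ≤ (q:ℝ)}, ENNReal.ofReal (G (s:ℝ) ω) :=
      Measurable.iInf (ι := {s : ℚ // 0 ≤ (s:ℝ) ∧ (s:ℝ) ≤ (q:ℝ)})
        fun s => ENNReal.measurable_ofReal.comp (hGm (s:ℝ))
    exact hmi (measurableSet_singleton 0)
  · have heq : {ω : PathSpace | 0 ≤ (q:ℝ) ∧ ENNReal.ofReal (q:ℝ) < c ∧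
        (⨅ s : {s : ℚ // 0 ≤ (s:ℝ) ∧ (s:ℝ) ≤ (q:ℝ)}, ENNReal.ofReal (G (s:ℝ) ω)) = 0}
        = ∅ := by
      ext ω
      simp only [Set.mem_setOf_eq, Set.mem_empty_iff_false, iff_false]
      intro hcon
      exact hq ⟨hcon.1, hcon.2.1⟩
    rw [heq]
    exact MeasurableSet.empty

lemma measurable_absT : Measurable absT := by
  have habs : absT = fun ω : PathSpace => fht fun t => min |ω.1 t| |ω.1 t - 1| = 0 := by
    funext ω
    rw [absT_eq]
    apply fht_congr
    intro t _
    constructor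
    · rintro (h | h) <;> simp [h, abs_nonneg]
    · intro h
      rcases min_cases |ω.1 t| |ω.1 t - 1| with ⟨he, _⟩ | ⟨he, _⟩
      · left; exact abs_eq_zero.1 (by rw [← he, h])
      · right; exact sub_eq_zero.1 (abs_eq_zero.1 (by rw [← he, h]))
  rw [habs]
  exact measurable_fht
    (fun ω => (ω.2.abs).min ((ω.2.sub continuous_const).abs))
    (fun t => ((measurable_eval t).abs).min (((measurable_eval t).sub measurable_const).abs))
    (fun t ω => le_min (abs_nonneg _) (abs_nonneg _))

lemma measurable_Xproc (t : ℝ) : Measurable fun ω => Xproc t ω := by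
  unfold Xproc
  exact Measurable.ite (measurableSet_lt measurable_const measurable_absT)
    (measurable_eval t)
    (measurable_eval_comp (ENNReal.measurable_toReal.comp measurable_absT))

lemma measurable_hitT (a : ℝ) : Measurable (hitT a) := by
  have h : hitT a = fun ω => fht fun t => |Xproc t ω - a| = 0 := by
    funext ω
    rw [hitT_eq]
    exact fht_congr fun t _ => by rw [abs_eq_zero, sub_eq_zero]
  rw [h]
  exact measurable_fht (fun ω => ((Xproc_cont ω).sub continuous_const).abs)
    (fun t => ((measurable_Xproc t).sub measurable_const).abs)
    (fun t ω => abs_nonneg _)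

lemma measurable_hInd (y z β γ : ℝ) : Measurable (hInd y z β γ) := by
  unfold hInd
  exact ((Measurable.ite (measurableSet_lt (measurable_hitT y) (measurable_hitT z))
    measurable_const measurable_const).add
    (Measurable.ite (measurableSet_lt (measurable_hitT z) (measurable_hitT y))
    measurable_const measurable_const))

lemma bddMeas_hInd (y z β γ : ℝ) : BddMeas (hInd y z β γ) := by
  refine ⟨measurable_hInd y z β γ, |β| + |γ|, fun ω => ?_⟩
  unfold hInd
  apply (abs_add_le _ _).trans
  have h1 : |if hitT y ω < hitT z ω then β else 0| ≤ |β| := by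
    split <;> simp [abs_nonneg]
  have h2 : |if hitT z ω < hitT y ω then γ else 0| ≤ |γ| := by
    split <;> simp [abs_nonneg]
  exact add_le_add h1 h2

end BMScale

namespace BMScale

/-- The axioms satisfied by the law of Brownian motion started at `x`. -/
structure BMLaw (μ : Measure PathSpace) (x : ℝ) : Prop where
  prob : IsProbabilityMeasure μ
  start : ∀ᵐ ω ∂μ, ω.1 0 = x
  incr : ∀ s t : ℝ, s ≤ t → μ.map (fun ω : PathSpace => ω.1 t - ω.1 s)
      = gaussianReal 0 (Real.toNNReal (t - s))
  indep : ∀ s t : ℝ, s ≤ t → ProbabilityTheory.Indep (pastSA s)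
      (MeasurableSpace.comap (fun ω : PathSpace => ω.1 t - ω.1 s) inferInstance) μ

lemma bmlaw_of_family {P : ℝ → Measure PathSpace} (hBM : IsBMFamily P) {x : ℝ}
    (hx : x ∈ Set.Icc (0:ℝ) 1) : BMLaw (P x) x :=
  ⟨hBM.1 x, hBM.2.1 x hx, fun s t hst => hBM.2.2.1 x hx s t hst,
    fun s t hst => hBM.2.2.2 x hx s t hst⟩

lemma measurable_incr (s t : ℝ) : Measurable fun ω : PathSpace => ω.1 t - ω.1 s :=
  (measurable_eval t).sub (measurable_eval s)

lemma pastSA_le (s : ℝ) : pastSA s ≤ (inferInstance : MeasurableSpace PathSpace) :=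
  iSup₂_le fun u _ => Measurable.comap_le (measurable_eval u)

lemma measurable_pastSA_eval {u s : ℝ} (h : u ≤ s) :
    Measurable[pastSA s] fun ω : PathSpace => ω.1 u := by
  rw [measurable_iff_comap_le]
  exact le_iSup₂ (f := fun (u : ℝ) (_ : u ≤ s) =>
    MeasurableSpace.comap (fun ω : PathSpace => ω.1 u) inferInstance) u h

/-- The law of a single coordinate is determined. -/
lemma map_eval_eq {μ ν : Measure PathSpace} {x : ℝ} (hμ : BMLaw μ x) (hν : BMLaw ν x)
    (r : ℝ) : μ.map (fun ω : PathSpace => ω.1 r) = ν.map (fun ω : PathSpace => ω.1 r) := by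
  rcases le_or_gt 0 r with hr | hr
  · have key : ∀ m : Measure PathSpace, BMLaw m x →
        m.map (fun ω : PathSpace => ω.1 r)
          = (gaussianReal 0 (Real.toNNReal (r - 0))).map (fun d => x + d) := by
      intro m hm
      have h1 : m.map (fun ω : PathSpace => ω.1 r)
          = m.map ((fun d => x + d) ∘ (fun ω : PathSpace => ω.1 r - ω.1 0)) := by
        apply Measure.map_congr
        filter_upwards [hm.start] with ω h0
        simp [Function.comp, h0]
      rw [h1, ← Measure.map_map (show Measurable fun d : ℝ => x + d from
        measurable_const.add measurable_id) (measurable_incr 0 r), hm.incr 0 r hr]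
    rw [key μ hμ, key ν hν]
  · have key : ∀ m : Measure PathSpace, BMLaw m x →
        m.map (fun ω : PathSpace => ω.1 r)
          = (gaussianReal 0 (Real.toNNReal (0 - r))).map (fun d => x - d) := by
      intro m hm
      have h1 : m.map (fun ω : PathSpace => ω.1 r)
          = m.map ((fun d => x - d) ∘ (fun ω : PathSpace => ω.1 0 - ω.1 r)) := by
        apply Measure.map_congr
        filter_upwards [hm.start] with ω h0
        simp [Function.comp, h0]
      rw [h1, ← Measure.map_map (show Measurable fun d : ℝ => x - d from
        measurable_const.sub measurable_id) (measurable_incr r 0), hm.incr r 0 hr.le]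
    rw [key μ hμ, key ν hν]

/-- The finite-dimensional distributions are determined. -/
lemma map_vec_eq {μ ν : Measure PathSpace} {x : ℝ} (hμ : BMLaw μ x) (hν : BMLaw ν x) :
    ∀ (n : ℕ) (t : Fin (n+1) → ℝ), Monotone t →
      μ.map (fun ω (i : Fin (n+1)) => ω.1 (t i)) = ν.map (fun ω (i : Fin (n+1)) => ω.1 (t i)) := by
  haveI := hμ.prob
  haveI := hν.prob
  intro n
  induction n with
  | zero =>
    intro t _
    have hcomp : ∀ m : Measure PathSpace,
        m.map (fun ω (i : Fin 1) => ω.1 (t i))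
          = (m.map (fun ω : PathSpace => ω.1 (t 0))).map (fun a _ => a) := by
      intro m
      rw [Measure.map_map (show Measurable fun (a : ℝ) (_ : Fin 1) => a from
        measurable_pi_lambda _ fun _ => measurable_id) (measurable_eval (t 0))]
      congr 1
      funext ω
      funext i
      have : i = 0 := Subsingleton.elim i 0
      rw [this]
      rfl
    rw [hcomp μ, hcomp ν, map_eval_eq hμ hν]
  | succ n ih =>
    intro t ht
    set s : ℝ := t ((Fin.last n).castSucc) with hs
    set u : ℝ := t (Fin.last (n+1)) with hu
    have hsu : s ≤ u := ht (Fin.le_last _)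
    set V : PathSpace → (Fin (n+1) → ℝ) := fun ω i => ω.1 (t i.castSucc) with hV
    set Δ : PathSpace → ℝ := fun ω => ω.1 u - ω.1 s with hΔ
    have hVm : Measurable V := measurable_pi_lambda _ fun i => measurable_eval _
    have hΔm : Measurable Δ := measurable_incr s u
    have hVpast : Measurable[pastSA s] V := by
      rw [measurable_iff_comap_le]
      have hpi : (MeasurableSpace.pi : MeasurableSpace (Fin (n+1) → ℝ))
          = ⨆ i : Fin (n+1), MeasurableSpace.comap (fun f : Fin (n+1) → ℝ => f i)
              inferInstance := rfl
      rw [hpi, MeasurableSpace.comap_iSup]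
      refine iSup_le fun i => ?_
      rw [MeasurableSpace.comap_comp]
      exact measurable_iff_comap_le.1
        (measurable_pastSA_eval (ht (Fin.castSucc_le_castSucc_iff.2 (Fin.le_last i))))
    -- independence of V and Δ
    have hindepfun : ∀ m : Measure PathSpace, BMLaw m x → ProbabilityTheory.IndepFun V Δ m := by
      intro m hm
      rw [ProbabilityTheory.IndepFun_iff]
      intro t1 t2 ht1 ht2
      refine (ProbabilityTheory.Indep_iff _ _ _).1 (hm.indep s u hsu) t1 t2 ?_ ?_
      · exact (measurable_iff_comap_le.1 hVpast) _ ht1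
      · exact ht2
    have hprod : ∀ m : Measure PathSpace, BMLaw m x → ∀ [IsProbabilityMeasure m],
        m.map (fun ω => (V ω, Δ ω)) = (m.map V).prod (m.map Δ) := by
      intro m hm _
      exact (ProbabilityTheory.indepFun_iff_map_prod_eq_prod_map_map
        hVm.aemeasurable hΔm.aemeasurable).1 (hindepfun m hm)
    -- reconstruction map
    set g : (Fin (n+1) → ℝ) × ℝ → (Fin (n+2) → ℝ) :=
      fun p => Fin.snoc p.1 (p.1 (Fin.last n) + p.2) with hg
    have hgm : Measurable g := by
      apply measurable_pi_lambda
      intro i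
      induction i using Fin.lastCases with
      | last =>
        simp only [hg, Fin.snoc_last]
        exact ((measurable_pi_apply _).comp measurable_fst).add measurable_snd
      | cast j =>
        simp only [hg, Fin.snoc_castSucc]
        exact (measurable_pi_apply _).comp measurable_fst
    have hcomp : (fun ω (i : Fin (n+2)) => ω.1 (t i)) = g ∘ (fun ω => (V ω, Δ ω)) := by
      funext ω
      funext i
      induction i using Fin.lastCases with
      | last => simp [hg, hV, hΔ, Fin.snoc_last, hu, hs]
      | cast j => simp [hg, hV, Fin.snoc_castSucc]
    have hmono' : Monotone fun i : Fin (n+1) => t i.castSucc :=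
      fun i j hij => ht (Fin.castSucc_le_castSucc_iff.2 hij)
    calc μ.map (fun ω (i : Fin (n+2)) => ω.1 (t i))
        = (μ.map (fun ω => (V ω, Δ ω))).map g := by
          rw [hcomp, ← Measure.map_map hgm (hVm.prodMk hΔm)]
      _ = ((μ.map V).prod (μ.map Δ)).map g := by rw [hprod μ hμ]
      _ = ((ν.map V).prod (ν.map Δ)).map g := by
          rw [ih _ hmono', hμ.incr s u hsu, hν.incr s u hsu]
      _ = (ν.map (fun ω => (V ω, Δ ω))).map g := by rw [hprod ν hν]
      _ = ν.map (fun ω (i : Fin (n+2)) => ω.1 (t i)) := by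
          rw [hcomp, ← Measure.map_map hgm (hVm.prodMk hΔm)]

end BMScale

namespace BMScale

/-- Finite-dimensional cylinder sets. -/
def cylSets : Set (Set PathSpace) :=
  {S | ∃ (J : Finset ℝ) (E : Set (J → ℝ)), MeasurableSet E ∧
    S = (fun (ω : PathSpace) (j : J) => ω.1 (j : ℝ)) ⁻¹' E}

lemma measurable_restr (J : Finset ℝ) :
    Measurable fun (ω : PathSpace) (j : J) => ω.1 (j : ℝ) :=
  measurable_pi_lambda _ fun j => measurable_eval (j : ℝ)

lemma isPiSystem_cylSets : IsPiSystem cylSets := by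
  rintro S1 ⟨J1, E1, hE1, rfl⟩ S2 ⟨J2, E2, hE2, rfl⟩ -
  classical
  refine ⟨J1 ∪ J2,
    (fun (f : (J1 ∪ J2 : Finset ℝ) → ℝ) (j : J1) => f ⟨j, Finset.mem_union_left _ j.2⟩) ⁻¹' E1 ∩
    (fun (f : (J1 ∪ J2 : Finset ℝ) → ℝ) (j : J2) => f ⟨j, Finset.mem_union_right _ j.2⟩) ⁻¹' E2,
    ?_, ?_⟩
  · exact ((measurable_pi_lambda _ fun j => measurable_pi_apply _) hE1).inter
      ((measurable_pi_lambda _ fun j => measurable_pi_apply _) hE2)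
  · ext ω
    simp only [Set.mem_inter_iff, Set.mem_preimage]

lemma generateFrom_cylSets :
    MeasurableSpace.generateFrom cylSets = (inferInstance : MeasurableSpace PathSpace) := by
  classical
  apply le_antisymm
  · rw [MeasurableSpace.generateFrom_le_iff]
    rintro S ⟨J, E, hE, rfl⟩
    exact measurable_restr J hE
  · have hps : (inferInstance : MeasurableSpace PathSpace)
        = ⨆ t : ℝ, MeasurableSpace.comap (fun ω : PathSpace => ω.1 t) inferInstance := by
      show MeasurableSpace.comap (Subtype.val) MeasurableSpace.pi = _
      have hpi : (MeasurableSpace.pi : MeasurableSpace (ℝ → ℝ))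
          = ⨆ t : ℝ, MeasurableSpace.comap (fun f : ℝ → ℝ => f t) inferInstance := rfl
      rw [hpi, MeasurableSpace.comap_iSup]
      congr 1
      funext t
      rw [MeasurableSpace.comap_comp]
      rfl
    rw [hps]
    refine iSup_le fun t => ?_
    rintro A ⟨B, hB, rfl⟩
    apply MeasurableSpace.measurableSet_generateFrom
    refine ⟨{t}, (fun (f : ({t} : Finset ℝ) → ℝ) => f ⟨t, Finset.mem_singleton_self t⟩) ⁻¹' B,
      (measurable_pi_apply _) hB, ?_⟩
    rfl

lemma measure_eq_of_subsingleton {α : Type*} [MeasurableSpace α] [Subsingleton α]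
    (μ ν : Measure α) [IsProbabilityMeasure μ] [IsProbabilityMeasure ν] : μ = ν := by
  ext s hs
  rcases Set.eq_empty_or_nonempty s with rfl | ⟨a, ha⟩
  · simp
  · have : s = Set.univ := Set.eq_univ_of_forall fun b => (Subsingleton.elim a b ▸ ha)
    rw [this]
    simp [measure_univ]

/-- Uniqueness of the Brownian law. -/
lemma bmlaw_unique {μ ν : Measure PathSpace} {x : ℝ} (hμ : BMLaw μ x) (hν : BMLaw ν x) :
    μ = ν := by
  classical
  haveI := hμ.prob
  haveI := hν.prob
  refine ext_of_generate_finite cylSets generateFrom_cylSets.symm isPiSystem_cylSets ?_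
    (by simp [measure_univ])
  rintro S ⟨J, E, hE, rfl⟩
  have hmap : μ.map (fun (ω : PathSpace) (j : J) => ω.1 (j : ℝ))
      = ν.map (fun (ω : PathSpace) (j : J) => ω.1 (j : ℝ)) := by
    rcases Finset.eq_empty_or_nonempty J with rfl | hJ
    · haveI : IsEmpty ((∅ : Finset ℝ) : Type) := by
        constructor
        rintro ⟨j, hj⟩
        exact absurd hj (Finset.notMem_empty j)
      haveI : IsProbabilityMeasure (μ.map (fun (ω : PathSpace) (j : ((∅ : Finset ℝ) : Type)) => ω.1 (j : ℝ))) :=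
        Measure.isProbabilityMeasure_map (measurable_restr ∅).aemeasurable
      haveI : IsProbabilityMeasure (ν.map (fun (ω : PathSpace) (j : ((∅ : Finset ℝ) : Type)) => ω.1 (j : ℝ))) :=
        Measure.isProbabilityMeasure_map (measurable_restr ∅).aemeasurable
      exact measure_eq_of_subsingleton _ _
    · obtain ⟨n, hn⟩ : ∃ n, J.card = n + 1 :=
        ⟨J.card - 1, (Nat.succ_pred_eq_of_pos (Finset.card_pos.2 hJ)).symm⟩
      set e : Fin (n+1) ≃o (J : Type) := J.orderIsoOfFin hn with he
      set tvec : Fin (n+1) → ℝ := fun i => ((e i : J) : ℝ) with htvec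
      have hmono : Monotone tvec := fun i j hij => by
        have : e i ≤ e j := e.monotone hij
        exact_mod_cast this
      set reindex : (Fin (n+1) → ℝ) → (J → ℝ) := fun v j => v (e.symm j) with hreindex
      have hrm : Measurable reindex := measurable_pi_lambda _ fun j => measurable_pi_apply _
      have hco : (fun (ω : PathSpace) (j : J) => ω.1 (j : ℝ))
          = reindex ∘ (fun ω (i : Fin (n+1)) => ω.1 (tvec i)) := by
        funext ω
        funext j
        show ω.1 (j : ℝ) = ω.1 ((e (e.symm j) : J) : ℝ)
        rw [OrderIso.apply_symm_apply]
      rw [hco, ← Measure.map_map hrm (measurable_pi_lambda _ fun i => measurable_eval _),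
        ← Measure.map_map hrm (measurable_pi_lambda _ fun i => measurable_eval _),
        map_vec_eq hμ hν n tvec hmono]
  rw [← Measure.map_apply (measurable_restr J) hE, ← Measure.map_apply (measurable_restr J) hE,
    hmap]

end BMScale

namespace BMScale

/-- Shift all path values by a constant `c`. -/
def shiftC (c : ℝ) (ω : PathSpace) : PathSpace :=
  ⟨fun t => ω.1 t + c, ω.2.add continuous_const⟩

lemma measurable_shiftC (c : ℝ) : Measurable (shiftC c) := by
  apply Measurable.subtype_mk
  exact measurable_pi_lambda _ fun t => (measurable_eval t).add measurable_const

lemma measurable_shiftC_pastSA (c s : ℝ) :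
    @Measurable PathSpace PathSpace (pastSA s) (pastSA s) (shiftC c) := by
  rw [measurable_iff_comap_le]
  unfold pastSA
  rw [MeasurableSpace.comap_iSup]
  refine iSup_le fun u => ?_
  rw [MeasurableSpace.comap_iSup]
  refine iSup_le fun hu => ?_
  rw [MeasurableSpace.comap_comp]
  have hfun : (fun ω : PathSpace => ω.1 u) ∘ shiftC c
      = (fun r => r + c) ∘ (fun ω : PathSpace => ω.1 u) := rfl
  rw [hfun, ← MeasurableSpace.comap_comp]
  refine le_trans (MeasurableSpace.comap_mono (Measurable.comap_le (measurable_add_const c))) ?_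
  exact le_iSup₂ (f := fun (u : ℝ) (_ : u ≤ s) =>
    MeasurableSpace.comap (fun ω : PathSpace => ω.1 u) inferInstance) u hu

lemma incr_comp_shiftC (c s t : ℝ) :
    (fun ω : PathSpace => ω.1 t - ω.1 s) ∘ shiftC c = fun ω : PathSpace => ω.1 t - ω.1 s := by
  funext ω
  show (ω.1 t + c) - (ω.1 s + c) = ω.1 t - ω.1 s
  ring

lemma bmlaw_map_shift {μ : Measure PathSpace} {x : ℝ} (c : ℝ) (h : BMLaw μ x) :
    BMLaw (μ.map (shiftC c)) (x + c) := by
  haveI := h.prob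
  constructor
  · exact Measure.isProbabilityMeasure_map (measurable_shiftC c).aemeasurable
  · have hms : MeasurableSet {ω : PathSpace | ω.1 0 = x + c} :=
      (measurable_eval 0) (measurableSet_singleton (x + c))
    rw [ae_map_iff (measurable_shiftC c).aemeasurable hms]
    filter_upwards [h.start] with ω h0
    show ω.1 0 + c = x + c
    rw [h0]
  · intro s t hst
    rw [Measure.map_map (measurable_incr s t) (measurable_shiftC c), incr_comp_shiftC]
    exact h.incr s t hst
  · intro s t hst
    rw [ProbabilityTheory.Indep_iff]
    intro t1 t2 ht1 ht2
    have hle2 : MeasurableSpace.comap (fun ω : PathSpace => ω.1 t - ω.1 s) inferInstance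
        ≤ (inferInstance : MeasurableSpace PathSpace) :=
      Measurable.comap_le (measurable_incr s t)
    have h2' : MeasurableSet[MeasurableSpace.comap
        (fun ω : PathSpace => ω.1 t - ω.1 s) inferInstance] (shiftC c ⁻¹' t2) := by
      obtain ⟨B, hB, rfl⟩ := ht2
      refine ⟨B, hB, ?_⟩
      rw [← Set.preimage_comp, incr_comp_shiftC]
    have h1' : MeasurableSet[pastSA s] (shiftC c ⁻¹' t1) := measurable_shiftC_pastSA c s ht1
    rw [Measure.map_apply (measurable_shiftC c) ((pastSA_le s _ ht1).inter (hle2 _ ht2)),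
      Measure.map_apply (measurable_shiftC c) (pastSA_le s _ ht1),
      Measure.map_apply (measurable_shiftC c) (hle2 _ ht2), Set.preimage_inter]
    exact (ProbabilityTheory.Indep_iff _ _ _).1 (h.indep s t hst) _ _ h1' h2'

lemma Pmap_shift {P : ℝ → Measure PathSpace} (hBM : IsBMFamily P) {x c : ℝ}
    (hx : x ∈ Set.Icc (0:ℝ) 1) (hxc : x + c ∈ Set.Icc (0:ℝ) 1) :
    (P x).map (shiftC c) = P (x + c) :=
  bmlaw_unique (bmlaw_map_shift c (bmlaw_of_family hBM hx)) (bmlaw_of_family hBM hxc)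

lemma rawT_shift (a c : ℝ) (ω : PathSpace) : rawT a (shiftC c ω) = rawT (a - c) ω := by
  unfold rawT
  exact fht_congr fun t _ => by
    show ω.1 t + c = a ↔ ω.1 t = a - c
    constructor <;> intro h <;> linarith

lemma shiftC_zero_val (c : ℝ) (ω : PathSpace) : (shiftC c ω).1 0 = ω.1 0 + c := rfl

end BMScale

namespace BMScale

variable {P : ℝ → Measure PathSpace}

lemma ae_neBot_of_prob {x : ℝ} (hBM : IsBMFamily P) : (ae (P x)).NeBot := by
  haveI := hBM.1 x
  exact ae_neBot.2 (IsProbabilityMeasure.ne_zero _)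

lemma rho0_mono (R : DynRisk P) (hBM : IsBMFamily P) {x : ℝ} (hx : x ∈ Set.Icc (0:ℝ) 1)
    {Y Z : PathSpace → ℝ} (hY : BddMeas Y) (hZ : BddMeas Z) (h : ∀ᵐ ω ∂P x, Y ω ≤ Z ω) :
    R.ρ0 x Y ≤ R.ρ0 x Z := by
  haveI := ae_neBot_of_prob (x := x) hBM
  have hae := R.mono (fun _ => 0) (isStoppingTime_const FF (0:ℝ≥0∞)) x hx Y Z hY hZ h
  obtain ⟨ω, hω⟩ := hae.exists
  rw [R.ρ0_eq, R.ρ0_eq] at hω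
  exact hω

lemma rho0_ae_const (R : DynRisk P) (hBM : IsBMFamily P) {x : ℝ} (hx : x ∈ Set.Icc (0:ℝ) 1)
    {Z : PathSpace → ℝ} (hZ : BddMeas Z) {c : ℝ} (h : ∀ᵐ ω ∂P x, Z ω = c) :
    R.ρ0 x Z = c := by
  haveI := ae_neBot_of_prob (x := x) hBM
  have hc : BddMeas (fun _ : PathSpace => c) := ⟨measurable_const, |c|, fun _ => le_refl _⟩
  have h3 : R.ρ0 x (fun _ => c) = c := by
    have h0bdd : BddMeas (fun _ : PathSpace => (0:ℝ)) := ⟨measurable_const, 0, by simp⟩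
    have hti := R.transInv (fun _ => 0) (isStoppingTime_const FF (0:ℝ≥0∞)) x hx
      (fun _ => 0) (fun _ => c) h0bdd hc
      (@measurable_const ℝ PathSpace _ ((isStoppingTime_const FF (0:ℝ≥0∞)).measurableSpace) c)
    have hnorm := R.normalized (fun _ => 0) (isStoppingTime_const FF (0:ℝ≥0∞)) x hx
    have hae : ∀ᵐ ω ∂P x, R.cρ (fun _ => 0) x (fun _ => (0:ℝ) + c) ω = 0 + c := by
      filter_upwards [hti, hnorm] with ω h1 h2
      rw [h1, h2]
    obtain ⟨ω, hω⟩ := hae.exists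
    rw [R.ρ0_eq] at hω
    have hfun : (fun _ : PathSpace => (0:ℝ) + c) = fun _ => c := by funext; ring
    rw [hfun] at hω
    rw [hω]
    ring
  have h1 : R.ρ0 x Z ≤ R.ρ0 x (fun _ => c) :=
    rho0_mono R hBM hx hZ hc (h.mono fun ω hω => hω.le)
  have h2 : R.ρ0 x (fun _ => c) ≤ R.ρ0 x Z :=
    rho0_mono R hBM hx hc hZ (h.mono fun ω hω => hω.ge)
  rw [le_antisymm h1 h2, h3]

/-- Value of the payoff when starting at the upper boundary. -/
lemma hInd_at_boundary (z γ' : ℝ) (hz : 0 < z) (ω : PathSpace) (h0 : ω.1 0 = z) :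
    hitT z ω = 0 ∧ 0 < hitT 0 ω := by
  have hz0 : hitT z ω = 0 := by
    have hmem : Xproc 0 ω = z := by rw [Xproc_zero, h0]
    have := fht_le (p := fun t => Xproc t ω = z) (le_refl 0) hmem
    rw [hitT_eq]
    simpa using this
  refine ⟨hz0, pos_iff_ne_zero.2 fun h00 => ?_⟩
  have hraw : rawT 0 ω = 0 := le_antisymm (h00 ▸ rawT_le_hitT 0 ω) zero_le
  have hne : rawT 0 ω ≠ ⊤ := by rw [hraw]; exact ENNReal.zero_ne_top
  obtain ⟨_, hval, _⟩ := fht_attains (isClosed_level ω.2 0) hne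
  have hval' : ω.1 ((rawT 0 ω).toReal) = 0 := hval
  rw [hraw] at hval'
  simp only [ENNReal.toReal_zero] at hval'
  rw [h0] at hval'
  exact absurd hval' hz.ne'

lemma hInd_boundary_gamma (z γ' : ℝ) (hz : 0 < z) (ω : PathSpace) (h0 : ω.1 0 = z) :
    hInd 0 z 0 γ' ω = γ' := by
  obtain ⟨hz0, h0pos⟩ := hInd_at_boundary z γ' hz ω h0
  unfold hInd
  rw [if_neg (by rw [hz0]; exact fun hcon => absurd hcon (not_lt.2 zero_le)),
    if_pos (by rw [hz0]; exact h0pos)]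
  ring

lemma hInd_boundary_beta (z β' : ℝ) (hz : 0 < z) (ω : PathSpace) (h0 : ω.1 0 = z) :
    hInd 0 z β' 0 ω = 0 := by
  obtain ⟨hz0, h0pos⟩ := hInd_at_boundary z β' hz ω h0
  unfold hInd
  rw [if_neg (by rw [hz0]; exact fun hcon => absurd hcon (not_lt.2 zero_le))]
  simp

/-- Pathwise identification of the shifted payoff. -/
lemma hInd_shift_eq {x₁ z zh : ℝ} (hx1 : 0 < x₁) (hxz : x₁ < z) (hzzh : z ≤ zh) (hzh : zh ≤ 1)
    (β' γ' : ℝ) (ω : PathSpace) (h0 : ω.1 0 = x₁) :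
    hInd (zh - z) zh β' γ' (shiftC (zh - z) ω) = hInd 0 z β' γ' ω := by
  set c : ℝ := zh - z with hc
  have hc0 : 0 ≤ c := by simp [hc]; linarith
  have h0' : (shiftC c ω).1 0 = x₁ + c := by rw [shiftC_zero_val, h0]
  have hmem' : (shiftC c ω).1 0 ∈ Set.Ioo c zh := by
    rw [h0']; constructor <;> [linarith; (simp only [hc]; linarith)]
  have hmem : ω.1 0 ∈ Set.Ioo 0 z := by rw [h0]; exact ⟨hx1, hxz⟩
  have hiff' := hit_iff (shiftC c ω) hc0 hzh (by simp only [hc]; linarith) hmem'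
  have hiff := hit_iff ω (le_refl 0) (hzzh.trans hzh) (hx1.trans hxz) hmem
  have hr1 : rawT zh (shiftC c ω) = rawT z ω := by
    rw [rawT_shift]; congr 1; simp [hc]
  have hr2 : rawT c (shiftC c ω) = rawT 0 ω := by
    rw [rawT_shift]; congr 1; simp
  unfold hInd
  have e1 : hitT c (shiftC c ω) < hitT zh (shiftC c ω) ↔ hitT 0 ω < hitT z ω := by
    rw [hiff'.2, hiff.2, hr1, hr2]
  have e2 : hitT zh (shiftC c ω) < hitT c (shiftC c ω) ↔ hitT z ω < hitT 0 ω := by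
    rw [hiff'.1, hiff.1, hr1, hr2]
  rw [if_congr e1 rfl rfl, if_congr e2 rfl rfl]

/-- Pathwise domination: widening the lower barrier to `0` can only favour hitting the top. -/
lemma hInd_dominate_gamma {x₂ c zh : ℝ} (hc0 : 0 ≤ c) (hcx : c < x₂) (hx2 : 0 < x₂)
    (hxzh : x₂ < zh) (hzh : zh ≤ 1) {γ' : ℝ} (hγ : 0 ≤ γ') (ω : PathSpace)
    (h0 : ω.1 0 = x₂) :
    hInd c zh 0 γ' ω ≤ hInd 0 zh 0 γ' ω := by
  have hmem1 : ω.1 0 ∈ Set.Ioo c zh := by rw [h0]; exact ⟨hcx, hxzh⟩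
  have hmem2 : ω.1 0 ∈ Set.Ioo 0 zh := by rw [h0]; exact ⟨hx2, hxzh⟩
  have hiff1 := hit_iff ω hc0 hzh (hcx.trans hxzh) hmem1
  have hiff2 := hit_iff ω (le_refl 0) hzh (hx2.trans hxzh) hmem2
  have hraw : rawT c ω ≤ rawT 0 ω :=
    fht_level_le ω.2 (Set.mem_uIcc.2 (Or.inr ⟨hc0, by rw [h0]; exact hcx.le⟩))
  have himp : hitT zh ω < hitT c ω → hitT zh ω < hitT 0 ω := fun h =>
    hiff2.1.2 ((hiff1.1.1 h).trans_le hraw)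
  unfold hInd
  simp only [ite_self, zero_add]
  by_cases h : hitT zh ω < hitT c ω
  · rw [if_pos h, if_pos (himp h)]
  · rw [if_neg h]
    split
    · exact hγ
    · exact le_refl 0

lemma hInd_dominate_beta {x₂ c zh : ℝ} (hc0 : 0 ≤ c) (hcx : c < x₂) (hx2 : 0 < x₂)
    (hxzh : x₂ < zh) (hzh : zh ≤ 1) {β' : ℝ} (hβ : 0 ≤ β') (ω : PathSpace)
    (h0 : ω.1 0 = x₂) :
    hInd 0 zh β' 0 ω ≤ hInd c zh β' 0 ω := by
  have hmem1 : ω.1 0 ∈ Set.Ioo c zh := by rw [h0]; exact ⟨hcx, hxzh⟩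
  have hmem2 : ω.1 0 ∈ Set.Ioo 0 zh := by rw [h0]; exact ⟨hx2, hxzh⟩
  have hiff1 := hit_iff ω hc0 hzh (hcx.trans hxzh) hmem1
  have hiff2 := hit_iff ω (le_refl 0) hzh (hx2.trans hxzh) hmem2
  have hraw : rawT c ω ≤ rawT 0 ω :=
    fht_level_le ω.2 (Set.mem_uIcc.2 (Or.inr ⟨hc0, by rw [h0]; exact hcx.le⟩))
  have himp : hitT 0 ω < hitT zh ω → hitT c ω < hitT zh ω := fun h =>
    hiff1.2.2 (hraw.trans_lt (hiff2.2.1 h))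
  unfold hInd
  simp only [ite_self, add_zero]
  by_cases h : hitT 0 ω < hitT zh ω
  · rw [if_pos h, if_pos (himp h)]
  · rw [if_neg h]
    split
    · exact hβ
    · exact le_refl 0

end BMScale

namespace BMScale

/-- Comparison of one-sided derivatives from comparison of values. -/
lemma deriv_le_of_slope {f g : ℝ → ℝ} {a b m d dh : ℝ} (hm : 0 < m)
    (hf : HasDerivWithinAt f d (Set.Iic a) a) (hg : HasDerivWithinAt g dh (Set.Iic b) b)
    (hfg : f a = g b) (hle : ∀ δ ∈ Set.Ioo (0:ℝ) m, f (a - δ) ≤ g (b - δ)) : dh ≤ d := by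
  have hfs := hasDerivWithinAt_iff_tendsto_slope.1 hf
  have hgs := hasDerivWithinAt_iff_tendsto_slope.1 hg
  have hmapf : Filter.Tendsto (fun δ : ℝ => a - δ) (nhdsWithin 0 (Set.Ioi 0))
      (nhdsWithin a (Set.Iic a \ {a})) := by
    rw [tendsto_nhdsWithin_iff]
    constructor
    · have : Filter.Tendsto (fun δ : ℝ => a - δ) (nhds 0) (nhds (a - 0)) :=
        (continuous_const.sub continuous_id).tendsto 0
      simpa using this.mono_left nhdsWithin_le_nhds
    · filter_upwards [self_mem_nhdsWithin] with δ (hδ : 0 < δ)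
      constructor
      · exact Set.mem_Iic.2 (by linarith)
      · simp only [Set.mem_singleton_iff]
        intro hcon
        have : δ = 0 := by linarith [hcon]
        exact hδ.ne' this
  have hmapg : Filter.Tendsto (fun δ : ℝ => b - δ) (nhdsWithin 0 (Set.Ioi 0))
      (nhdsWithin b (Set.Iic b \ {b})) := by
    rw [tendsto_nhdsWithin_iff]
    constructor
    · have : Filter.Tendsto (fun δ : ℝ => b - δ) (nhds 0) (nhds (b - 0)) :=
        (continuous_const.sub continuous_id).tendsto 0
      simpa using this.mono_left nhdsWithin_le_nhds
    · filter_upwards [self_mem_nhdsWithin] with δ (hδ : 0 < δ)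
      constructor
      · exact Set.mem_Iic.2 (by linarith)
      · simp only [Set.mem_singleton_iff]
        intro hcon
        have : δ = 0 := by linarith [hcon]
        exact hδ.ne' this
  have F1 : Filter.Tendsto (fun δ : ℝ => slope f a (a - δ)) (nhdsWithin 0 (Set.Ioi 0))
      (nhds d) := hfs.comp hmapf
  have F2 : Filter.Tendsto (fun δ : ℝ => slope g b (b - δ)) (nhdsWithin 0 (Set.Ioi 0))
      (nhds dh) := hgs.comp hmapg
  refine le_of_tendsto_of_tendsto F2 F1 ?_
  have hmem : Set.Iio m ∈ nhdsWithin (0:ℝ) (Set.Ioi 0) :=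
    nhdsWithin_le_nhds (Iio_mem_nhds hm)
  filter_upwards [self_mem_nhdsWithin, hmem] with δ (hδ : 0 < δ) (hδm : δ < m)
  have hslopef : slope f a (a - δ) = (f a - f (a - δ)) / δ := by
    rw [slope_def_field]
    rw [show a - δ - a = -δ by ring, div_neg]
    ring
  have hslopeg : slope g b (b - δ) = (g b - g (b - δ)) / δ := by
    rw [slope_def_field]
    rw [show b - δ - b = -δ by ring, div_neg]
    ring
  rw [hslopef, hslopeg]
  exact (div_le_div_iff_of_pos_right hδ).2 (by linarith [hle δ ⟨hδ, hδm⟩, hfg])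

end BMScale

open BMScale

/-- Scaling: with `h = h^{0,z}_{0,γ}` and `ĥ = h^{0,ẑ}_{0,γ}` for `z ≤ ẑ`, one has
`h(z-δ) ≤ ĥ(ẑ-δ)` for `δ ∈ (0,z)`, hence `h′⁻(z) ≥ ĥ′⁻(ẑ)` when the left derivatives
exist; conversely for `h^{0,z}_{β,0}` the left derivatives satisfy `h′⁻(z) ≤ ĥ′⁻(ẑ)`. -/
theorem hFun_scaling (P : ℝ → Measure PathSpace) (R : DynRisk P)
    (hBM : IsBMFamily P) (hSM : StronglyMarkov R)
    (γ : ℝ) (hγ : 0 ≤ γ) (z zhat : ℝ) (h0z : 0 < z) (hzz : z ≤ zhat) (hz1 : zhat ≤ 1) :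
    (∀ δ ∈ Set.Ioo (0:ℝ) z, hFunR R 0 z 0 γ (z - δ) ≤ hFunR R 0 zhat 0 γ (zhat - δ)) ∧
    (∀ d dhat : ℝ, HasDerivWithinAt (hFunR R 0 z 0 γ) d (Set.Iic z) z →
      HasDerivWithinAt (hFunR R 0 zhat 0 γ) dhat (Set.Iic zhat) zhat → dhat ≤ d) ∧
    (∀ β : ℝ, 0 ≤ β → ∀ d dhat : ℝ,
      HasDerivWithinAt (hFunR R 0 z β 0) d (Set.Iic z) z →
      HasDerivWithinAt (hFunR R 0 zhat β 0) dhat (Set.Iic zhat) zhat → d ≤ dhat) := by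
  classical
  obtain ⟨hSM1, ρt, hρt⟩ := hSM
  have h0zh : 0 < zhat := h0z.trans_le hzz
  have hmemz : z ∈ Set.Icc (0:ℝ) 1 := ⟨h0z.le, hzz.trans hz1⟩
  have hmemzh : zhat ∈ Set.Icc (0:ℝ) 1 := ⟨h0zh.le, hz1⟩
  -- the exact transfer between the two startpoints
  have key : ∀ δ ∈ Set.Ioo (0:ℝ) z, ∀ β' γ' : ℝ,
      R.ρ0 (zhat - δ) (hInd (zhat - z) zhat β' γ') = R.ρ0 (z - δ) (hInd 0 z β' γ') := by
    rintro δ ⟨hδ0, hδz⟩ β' γ'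
    have hx1 : z - δ ∈ Set.Icc (0:ℝ) 1 := ⟨by linarith, by linarith [hmemz.2]⟩
    have hx2 : zhat - δ ∈ Set.Icc (0:ℝ) 1 := ⟨by linarith, by linarith⟩
    have hmap : (P (zhat - δ)).map (hInd (zhat - z) zhat β' γ')
        = (P (z - δ)).map (hInd 0 z β' γ') := by
      have hshift : (P (z - δ)).map (shiftC (zhat - z)) = P (zhat - δ) := by
        have h := Pmap_shift hBM (x := z - δ) (c := zhat - z) hx1
          (by rw [show z - δ + (zhat - z) = zhat - δ by ring]; exact hx2)
        rwa [show z - δ + (zhat - z) = zhat - δ by ring] at h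
      rw [← hshift, Measure.map_map (measurable_hInd _ _ _ _) (measurable_shiftC _)]
      apply Measure.map_congr
      filter_upwards [hBM.2.1 (z - δ) hx1] with ω h0
      exact hInd_shift_eq (by linarith) (by linarith) hzz hz1 β' γ' ω h0
    rw [hρt _ hx2 _ (bddMeas_hInd _ _ _ _), hρt _ hx1 _ (bddMeas_hInd _ _ _ _), hmap]
  have part1 : ∀ δ ∈ Set.Ioo (0:ℝ) z,
      hFunR R 0 z 0 γ (z - δ) ≤ hFunR R 0 zhat 0 γ (zhat - δ) := by
    intro δ hδ
    obtain ⟨hδ0, hδz⟩ := hδ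
    have hx2 : zhat - δ ∈ Set.Icc (0:ℝ) 1 := ⟨by linarith, by linarith⟩
    show R.ρ0 (z - δ) (hInd 0 z 0 γ) ≤ R.ρ0 (zhat - δ) (hInd 0 zhat 0 γ)
    rw [← key δ ⟨hδ0, hδz⟩ 0 γ]
    refine rho0_mono R hBM hx2 (bddMeas_hInd _ _ _ _) (bddMeas_hInd _ _ _ _) ?_
    filter_upwards [hBM.2.1 (zhat - δ) hx2] with ω h0
    exact hInd_dominate_gamma (by linarith) (by linarith) (by linarith) (by linarith)
      hz1 hγ ω h0
  have vγz : hFunR R 0 z 0 γ z = γ := by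
    refine rho0_ae_const R hBM hmemz (bddMeas_hInd _ _ _ _) ?_
    filter_upwards [hBM.2.1 z hmemz] with ω h0
    exact hInd_boundary_gamma z γ h0z ω h0
  have vγzh : hFunR R 0 zhat 0 γ zhat = γ := by
    refine rho0_ae_const R hBM hmemzh (bddMeas_hInd _ _ _ _) ?_
    filter_upwards [hBM.2.1 zhat hmemzh] with ω h0
    exact hInd_boundary_gamma zhat γ h0zh ω h0
  refine ⟨part1, ?_, ?_⟩
  · intro d dhat hd hdhat
    exact deriv_le_of_slope h0z hd hdhat (vγz.trans vγzh.symm) part1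
  · intro β hβ d dhat hd hdhat
    have part3 : ∀ δ ∈ Set.Ioo (0:ℝ) z,
        hFunR R 0 zhat β 0 (zhat - δ) ≤ hFunR R 0 z β 0 (z - δ) := by
      intro δ hδ
      obtain ⟨hδ0, hδz⟩ := hδ
      have hx2 : zhat - δ ∈ Set.Icc (0:ℝ) 1 := ⟨by linarith, by linarith⟩
      show R.ρ0 (zhat - δ) (hInd 0 zhat β 0) ≤ R.ρ0 (z - δ) (hInd 0 z β 0)
      rw [← key δ ⟨hδ0, hδz⟩ β 0]
      refine rho0_mono R hBM hx2 (bddMeas_hInd _ _ _ _) (bddMeas_hInd _ _ _ _) ?_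
      filter_upwards [hBM.2.1 (zhat - δ) hx2] with ω h0
      exact hInd_dominate_beta (by linarith) (by linarith) (by linarith) (by linarith)
        hz1 hβ ω h0
    have vβz : hFunR R 0 z β 0 z = 0 := by
      refine rho0_ae_const R hBM hmemz (bddMeas_hInd _ _ _ _) ?_
      filter_upwards [hBM.2.1 z hmemz] with ω h0
      exact hInd_boundary_beta z β h0z ω h0
    have vβzh : hFunR R 0 zhat β 0 zhat = 0 := by
      refine rho0_ae_const R hBM hmemzh (bddMeas_hInd _ _ _ _) ?_
      filter_upwards [hBM.2.1 zhat hmemzh] with ω h0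
      exact hInd_boundary_beta zhat β h0zh ω h0
    exact deriv_le_of_slope h0z hdhat hd (vβzh.trans vβz.symm) part3
end
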